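/- First element of each block of the revolving-door generator: for all N K k : ℕ with 1 ≤ k ≤ K and k ≤ N, the k-th entry of kcombsRevol K ((List.range' 1 N).reverse) is nonempty and its first element is the increasing list [1, 2, …, k], i.e., List.range' 1 k. -/
import Mathlib


variable {α : Type*}

/-- One step of the revolving-door K-combination generator (for `css` of length K+1). -/
def forRevol (x : α) (css : List (List (List α))) : List (List (List α)) :=
  [[[]]] ++ (List.range (css.length - 1)).map
    (fun i => css.getD (i + 1) [] ++ ((css.getD i []).map (· ++ [x])).reverse)

/-- Revolving-door K-combination generator. -/
def kcombsRevol (K : ℕ) : List α → List (List (List α))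
  | [] => [[[]]] ++ List.replicate K []
  | x :: xs => forRevol x (kcombsRevol K xs)

lemma length_forRevol (x : α) (css : List (List (List α))) :
    (forRevol x css).length = css.length - 1 + 1 := by
  simp [forRevol]

lemma getD_forRevol_zero (x : α) (css : List (List (List α))) :
    (forRevol x css).getD 0 [] = [[]] := rfl

lemma getD_forRevol_succ (x : α) (css : List (List (List α))) (i : ℕ)
    (hi : i < css.length - 1) :
    (forRevol x css).getD (i + 1) [] =
      css.getD (i + 1) [] ++ ((css.getD i []).map (· ++ [x])).reverse := by
  simp [forRevol, List.getD, List.getElem?_map, List.getElem?_range hi]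

lemma kcombs_step (K n : ℕ) :
    kcombsRevol K ((List.range' 1 (n+1)).reverse) =
      forRevol (1+n) (kcombsRevol K ((List.range' 1 n).reverse)) := by
  rw [List.range'_concat]
  simp [kcombsRevol]

lemma key (K n : ℕ) :
    (kcombsRevol K ((List.range' 1 n).reverse)).length = K + 1 ∧
    (∀ k, 1 ≤ k → k ≤ n → k ≤ K →
      (kcombsRevol K ((List.range' 1 n).reverse)).getD k [] ≠ [] ∧
      ((kcombsRevol K ((List.range' 1 n).reverse)).getD k []).head? =
        some (List.range' 1 k)) ∧
    (∀ k, n < k → k ≤ K →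
      (kcombsRevol K ((List.range' 1 n).reverse)).getD k [] = []) ∧
    (n ≤ K → (kcombsRevol K ((List.range' 1 n).reverse)).getD n [] = [List.range' 1 n]) := by
  induction n with
  | zero =>
    refine ⟨by simp [kcombsRevol], ?_, ?_, ?_⟩
    · intro k hk1 hk0 _; omega
    · intro k hk hkK
      simp [kcombsRevol]
      have h1 : k - 1 < K := by omega
      cases k with
      | zero => omega
      | succ j => simp [List.getD, List.getElem?_replicate, show j < K by omega]
    · intro _; simp [kcombsRevol]
  | succ n ih =>
    obtain ⟨hlen, hhead, hempty, hlast⟩ := ih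
    rw [kcombs_step]
    have hL : (kcombsRevol K ((List.range' 1 n).reverse)).length - 1 = K := by omega
    have hlen' : (forRevol (1+n) (kcombsRevol K ((List.range' 1 n).reverse))).length = K + 1 := by
      rw [length_forRevol, hL]
    have hget : ∀ i, i < K →
        (forRevol (1+n) (kcombsRevol K ((List.range' 1 n).reverse))).getD (i+1) [] =
          (kcombsRevol K ((List.range' 1 n).reverse)).getD (i+1) [] ++
          (((kcombsRevol K ((List.range' 1 n).reverse)).getD i []).map (· ++ [1+n])).reverse := by
      intro i hi
      exact getD_forRevol_succ _ _ i (by omega)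
    have hnew : n + 1 ≤ K →
        (forRevol (1+n) (kcombsRevol K ((List.range' 1 n).reverse))).getD (n+1) [] =
          [List.range' 1 (n+1)] := by
      intro h
      rw [hget n (by omega), hempty (n+1) (by omega) (by omega), hlast (by omega)]
      simp [List.range'_concat]
    refine ⟨hlen', ?_, ?_, ?_⟩
    · intro k hk1 hkn hkK
      rcases Nat.lt_or_ge k (n+1) with hlt | hge
      · -- k ≤ n : preserved
        obtain ⟨j, rfl⟩ : ∃ j, k = j + 1 := ⟨k - 1, by omega⟩
        rw [hget j (by omega)]
        obtain ⟨hne, hh⟩ := hhead (j+1) hk1 (by omega) hkK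
        refine ⟨fun hc => hne (List.append_eq_nil_iff.mp hc).1, ?_⟩
        rw [List.head?_append, hh]
        rfl
      · have : k = n + 1 := by omega
        subst this
        rw [hnew hkK]
        simp
    · intro k hk hkK
      obtain ⟨j, rfl⟩ : ∃ j, k = j + 1 := ⟨k - 1, by omega⟩
      rw [hget j (by omega), hempty (j+1) (by omega) hkK, hempty j (by omega) (by omega)]
      simp
    · intro h
      rw [hnew h]

/-- First element of each block of the revolving-door generator. -/
theorem kcombsRevol_head (N K k : ℕ) (hk1 : 1 ≤ k) (hkK : k ≤ K) (hkN : k ≤ N) :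
    ((kcombsRevol K ((List.range' 1 N).reverse)).getD k []) ≠ [] ∧
      ((kcombsRevol K ((List.range' 1 N).reverse)).getD k []).head? =
        some (List.range' 1 k) := by
  exact (key K N).2.1 k hk1 hkN hkK
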